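/- Let d be a homogeneous derivation of degree 0 from tsns to tsns⊗tsns. Then x∗d(L_0) = 0 for all x ∈ tsns, and consequently d(L_0) ∈ ℂM_0⊗M_0. -/

import Mathlib

open Finsupp

/-- Basis indices of the twisted `N = 1` Schrödinger–Neveu–Schwarz algebra.
`L n` is `L_n` (`n ∈ ℤ`), `G k` is `G_{k+1/2}` (`k ∈ ℤ`),
`Y k` is `Y_{k/2}` and `M k` is `M_{k/2}` (`k ∈ ℤ`, so `k/2` ranges over `(1/2)ℤ`). -/
inductive TIdx : Type
  | L : ℤ → TIdx
  | G : ℤ → TIdx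
  | Y : ℤ → TIdx
  | M : ℤ → TIdx
  deriving DecidableEq

noncomputable section

/-- The underlying vector space of `tsns`: the free `ℂ`-vector space on the basis. -/
abbrev Tsns : Type := TIdx →₀ ℂ

/-- The basis vectors. -/
def bs (i : TIdx) : Tsns := Finsupp.single i 1

/-- The `ℤ₂`-parity of a basis vector. -/
def parity : TIdx → ZMod 2
  | .L _ => 0
  | .G _ => 1
  | .Y k => (k : ZMod 2)
  | .M k => (k : ZMod 2)

/-- The sign `(-1)^{ab}` for parities `a, b`. -/
def sg (a b : ZMod 2) : ℂ := if a = 1 ∧ b = 1 then -1 else 1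

/-- The super-bracket of `tsns` on basis vectors. -/
def brIdx : TIdx → TIdx → Tsns
  | .L n, .L m => ((m : ℂ) - n) • bs (.L (n + m))
  | .L n, .G k => ((k : ℂ) + 1/2 - n/2) • bs (.G (k + n))
  | .G k, .L n => (-((k : ℂ) + 1/2 - n/2)) • bs (.G (k + n))
  | .L n, .Y k => (if (k : ZMod 2) = 0 then ((k : ℂ) - n)/2 else (k : ℂ)/2) • bs (.Y (k + 2*n))
  | .Y k, .L n => (-(if (k : ZMod 2) = 0 then ((k : ℂ) - n)/2 else (k : ℂ)/2)) • bs (.Y (k + 2*n))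
  | .L n, .M k => (if (k : ZMod 2) = 0 then (k : ℂ)/2 else ((k : ℂ) + n)/2) • bs (.M (k + 2*n))
  | .M k, .L n => (-(if (k : ZMod 2) = 0 then (k : ℂ)/2 else ((k : ℂ) + n)/2)) • bs (.M (k + 2*n))
  | .G k, .G l => (2 : ℂ) • bs (.L (k + l + 1))
  | .G l, .Y k => (if (k : ZMod 2) = 0 then ((k : ℂ) - 2*l - 1)/4 else 2) • bs (.Y (k + 2*l + 1))
  | .Y k, .G l => (if (k : ZMod 2) = 0 then -(((k : ℂ) - 2*l - 1)/4) else 2) • bs (.Y (k + 2*l + 1))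
  | .G l, .M k => (if (k : ZMod 2) = 0 then (k : ℂ)/4 else 2) • bs (.M (k + 2*l + 1))
  | .M k, .G l => (if (k : ZMod 2) = 0 then -((k : ℂ)/4) else 2) • bs (.M (k + 2*l + 1))
  | .Y k, .Y l =>
      (if (k : ZMod 2) = 0 then (if (l : ZMod 2) = 0 then ((l : ℂ) - k)/4 else (l : ℂ)/4)
       else (if (l : ZMod 2) = 0 then -((k : ℂ)/4) else 2)) • bs (.M (k + l))
  | _, _ => 0

/-- The super-bracket of `tsns`, as a bilinear map. -/
def brk : Tsns →ₗ[ℂ] Tsns →ₗ[ℂ] Tsns :=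
  Finsupp.lsum ℂ fun i => LinearMap.toSpanSingleton ℂ _
    (Finsupp.lsum ℂ fun j => LinearMap.toSpanSingleton ℂ Tsns (brIdx i j))

/-- `x` is homogeneous of parity `σ`. -/
def IsHom (σ : ZMod 2) (x : Tsns) : Prop := ∀ i ∈ x.support, parity i = σ

/-- The tensor square `tsns ⊗ tsns`, modelled as the free vector space on pairs
of basis indices. -/
abbrev T2 : Type := (TIdx × TIdx) →₀ ℂ

/-- The tensor cube `tsns ⊗ tsns ⊗ tsns`. -/
abbrev T3 : Type := (TIdx × TIdx × TIdx) →₀ ℂ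

/-- The tensor product map `tsns × tsns → tsns ⊗ tsns`. -/
def tp : Tsns →ₗ[ℂ] Tsns →ₗ[ℂ] T2 :=
  Finsupp.lsum ℂ fun i => LinearMap.toSpanSingleton ℂ _
    (Finsupp.lsum ℂ fun j => LinearMap.toSpanSingleton ℂ T2 (Finsupp.single (i, j) 1))

/-- The tensor product map `tsns × tsns × tsns → tsns ⊗ tsns ⊗ tsns`. -/
def t3 : Tsns →ₗ[ℂ] Tsns →ₗ[ℂ] Tsns →ₗ[ℂ] T3 :=
  Finsupp.lsum ℂ fun i => LinearMap.toSpanSingleton ℂ _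
    (Finsupp.lsum ℂ fun j => LinearMap.toSpanSingleton ℂ _
      (Finsupp.lsum ℂ fun k => LinearMap.toSpanSingleton ℂ T3 (Finsupp.single (i, j, k) 1)))

/-- The adjoint diagonal action of `tsns` on `tsns ⊗ tsns`:
`x ∗ (a ⊗ b) = [x,a] ⊗ b + (-1)^{[x][a]} a ⊗ [x,b]`. -/
def star2 : Tsns →ₗ[ℂ] T2 →ₗ[ℂ] T2 :=
  Finsupp.lsum ℂ fun i => LinearMap.toSpanSingleton ℂ _
    (Finsupp.lsum ℂ fun p => LinearMap.toSpanSingleton ℂ T2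
      (tp (brIdx i p.1) (bs p.2) + sg (parity i) (parity p.1) • tp (bs p.1) (brIdx i p.2)))

/-- The adjoint diagonal action of `tsns` on `tsns ⊗ tsns ⊗ tsns`. -/
def star3 : Tsns →ₗ[ℂ] T3 →ₗ[ℂ] T3 :=
  Finsupp.lsum ℂ fun i => LinearMap.toSpanSingleton ℂ _
    (Finsupp.lsum ℂ fun t => LinearMap.toSpanSingleton ℂ T3
      (t3 (brIdx i t.1) (bs t.2.1) (bs t.2.2)
        + sg (parity i) (parity t.1) • t3 (bs t.1) (brIdx i t.2.1) (bs t.2.2)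
        + (sg (parity i) (parity t.1) * sg (parity i) (parity t.2.1)) •
            t3 (bs t.1) (bs t.2.1) (brIdx i t.2.2)))

/-- The super-twist map `τ(x ⊗ y) = (-1)^{[x][y]} y ⊗ x`. -/
def tau : T2 →ₗ[ℂ] T2 :=
  Finsupp.lsum ℂ fun p => LinearMap.toSpanSingleton ℂ T2
    (sg (parity p.1) (parity p.2) • Finsupp.single (p.2, p.1) 1)

/-- The super-cyclic map `ξ(x₁ ⊗ x₂ ⊗ x₃) = (-1)^{[x₁]([x₂]+[x₃])} x₂ ⊗ x₃ ⊗ x₁`. -/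
def xi : T3 →ₗ[ℂ] T3 :=
  Finsupp.lsum ℂ fun t => LinearMap.toSpanSingleton ℂ T3
    (sg (parity t.1) (parity t.2.1 + parity t.2.2) • Finsupp.single (t.2.1, t.2.2, t.1) 1)

/-- `Im(1⊗1 - τ) ⊆ tsns ⊗ tsns`. -/
def ImSkew : Submodule ℂ T2 := LinearMap.range (LinearMap.id - tau)

/-- `ℂ M₀ ⊗ M₀`, the tensor square of the center. -/
def CC : Submodule ℂ T2 := Submodule.span ℂ {Finsupp.single (TIdx.M 0, TIdx.M 0) 1}

/-- The `(1/2)ℤ`-degree of a basis vector, recorded in half-units (i.e. twice the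
degree, an integer). -/
def hdeg : TIdx → ℤ
  | .L n => 2*n
  | .G k => 2*k + 1
  | .Y k => k
  | .M k => k

/-- The degree (in half-units) of a basis vector of the tensor square. -/
def hdeg2 (p : TIdx × TIdx) : ℤ := hdeg p.1 + hdeg p.2

/-- `d : tsns → tsns ⊗ tsns` is a homogeneous derivation of `ℤ₂`-parity `π`:
`d [x,y] = (-1)^{[d][x]} x ∗ d y - (-1)^{[y]([d]+[x])} y ∗ d x`
(stated on homogeneous basis vectors). -/
def IsDerP (π : ZMod 2) (d : Tsns →ₗ[ℂ] T2) : Prop :=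
  ∀ i j : TIdx, d (brk (bs i) (bs j)) =
    sg π (parity i) • star2 (bs i) (d (bs j))
      - sg (parity j) (π + parity i) • star2 (bs j) (d (bs i))

/-- An even derivation `tsns → tsns ⊗ tsns`. -/
def IsDer2 (d : Tsns →ₗ[ℂ] T2) : Prop := IsDerP 0 d

/-- The special derivations `d^♮` on basis vectors (parameters `α, α†, β, β†`). -/
def dnatB (a a' b b' : ℂ) : TIdx → T2
  | .L n => (a * n) • Finsupp.single (.M 0, .M (2*n)) 1
      + (a' * n) • Finsupp.single (.M (2*n), .M 0) 1
  | .G k => (a * ((k : ℂ) + 1/2)) • Finsupp.single (.M 0, .M (2*k+1)) 1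
      + (a' * ((k : ℂ) + 1/2)) • Finsupp.single (.M (2*k+1), .M 0) 1
  | .Y k => b • Finsupp.single (.M 0, .Y k) 1 + b' • Finsupp.single (.Y k, .M 0) 1
  | .M k => (2*b) • Finsupp.single (.M 0, .M k) 1 + (2*b') • Finsupp.single (.M k, .M 0) 1

/-- The special derivations `d^♮ : tsns → tsns ⊗ tsns`. -/
def dnat (a a' b b' : ℂ) : Tsns →ₗ[ℂ] T2 :=
  Finsupp.lsum ℂ fun i => LinearMap.toSpanSingleton ℂ T2 (dnatB a a' b b' i)

/-- Multiplication by `(-1)^{σ·[u]}` on `tsns ⊗ tsns`. -/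
def twT2 (σ : ZMod 2) : T2 →ₗ[ℂ] T2 :=
  Finsupp.lsum ℂ fun p => LinearMap.toSpanSingleton ℂ T2
    (sg σ (parity p.1 + parity p.2) • Finsupp.single p 1)

/-- The coboundary `Δ_r (x) = (-1)^{[r][x]} x ∗ r`. -/
def Δr (r : T2) : Tsns →ₗ[ℂ] T2 :=
  Finsupp.lsum ℂ fun i => LinearMap.toSpanSingleton ℂ T2 (star2 (bs i) (twT2 (parity i) r))

/-- The embedding `tsns ⊗ (tsns ⊗ tsns) → tsns ⊗ tsns ⊗ tsns`. -/
def t13 : Tsns →ₗ[ℂ] T2 →ₗ[ℂ] T3 :=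
  Finsupp.lsum ℂ fun i => LinearMap.toSpanSingleton ℂ _
    (Finsupp.lsum ℂ fun q => LinearMap.toSpanSingleton ℂ T3 (Finsupp.single (i, q.1, q.2) 1))

/-- `1 ⊗ D : tsns ⊗ tsns → tsns ⊗ tsns ⊗ tsns` for an (even) linear map `D`. -/
def oneTensor (D : Tsns →ₗ[ℂ] T2) : T2 →ₗ[ℂ] T3 :=
  Finsupp.lsum ℂ fun p => LinearMap.toSpanSingleton ℂ T3 (t13 (bs p.1) (D (bs p.2)))

/-- The summand of `c(r)` coming from a pair of basis tensors
`p = a_i ⊗ b_i`, `q = a_j ⊗ b_j`. -/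
def cB (p q : TIdx × TIdx) : T3 :=
  sg (parity q.1) (parity p.2) • t3 (brIdx p.1 q.1) (bs p.2) (bs q.2)
    + t3 (bs p.1) (brIdx p.2 q.1) (bs q.2)
    + sg (parity q.1) (parity p.2) • t3 (bs p.1) (bs q.1) (brIdx p.2 q.2)

/-- `c` as a bilinear map. -/
def cY : T2 →ₗ[ℂ] T2 →ₗ[ℂ] T3 :=
  Finsupp.lsum ℂ fun p => LinearMap.toSpanSingleton ℂ _
    (Finsupp.lsum ℂ fun q => LinearMap.toSpanSingleton ℂ T3 (cB p q))

/-- `c(r) = [r¹²,r¹³] + [r¹²,r²³] + [r¹³,r²³]`. -/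
def cr (r : T2) : T3 := cY r r

/-- `(tsns, [·,·], D)` is a Lie superbialgebra: `Im D ⊆ Im(1⊗1−τ)`, the super
co-Jacobi identity holds, and `D` is a 1-cocycle. -/
def IsSuperBialg (D : Tsns →ₗ[ℂ] T2) : Prop :=
  (∀ x : Tsns, D x ∈ ImSkew) ∧
  (∀ x : Tsns,
    oneTensor D (D x) + xi (oneTensor D (D x)) + xi (xi (oneTensor D (D x))) = 0) ∧
  (∀ i j : TIdx, D (brk (bs i) (bs j)) =
    star2 (bs i) (D (bs j)) - sg (parity i) (parity j) • star2 (bs j) (D (bs i)))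

end

/-! `ad L₀` acts on a basis vector of half-degree `h` by `h/2`, so the derivation rule applied to
`[L₀, x] = (h/2) x` cancels the term `L₀ ∗ d x` against `d [L₀, x]` and leaves `x ∗ d L₀ = 0`.
An element `r` killed by every `L_n` lies in `ℂ M₀ ⊗ M₀`: if a basis tensor `a ⊗ b` with `a ≠ M₀`
occurs in `r`, then for `n` large `L_n` moves `a` to a basis vector not occurring as a first factor
of `r`, with a nonzero coefficient, and this term of `L_n ∗ r` cannot cancel. -/

namespace TIdx

def shiftL (n : ℤ) : TIdx → TIdx
  | .L m => .L (n + m)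
  | .G k => .G (k + n)
  | .Y k => .Y (k + 2 * n)
  | .M k => .M (k + 2 * n)

noncomputable def coeffL (n : ℤ) : TIdx → ℂ
  | .L m => (m : ℂ) - n
  | .G k => (k : ℂ) + 1/2 - n/2
  | .Y k => if (k : ZMod 2) = 0 then ((k : ℂ) - n)/2 else (k : ℂ)/2
  | .M k => if (k : ZMod 2) = 0 then (k : ℂ)/2 else ((k : ℂ) + n)/2

@[simp]
lemma shiftL_zero (i : TIdx) : shiftL 0 i = i := by
  cases i <;> simp [shiftL]

lemma shiftL_injective (n : ℤ) : Function.Injective (shiftL n) := by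
  intro a b h
  cases a <;> cases b <;> simp_all [shiftL]

lemma hdeg_shiftL (n : ℤ) (i : TIdx) : hdeg (shiftL n i) = hdeg i + 2 * n := by
  cases i <;> simp only [shiftL, hdeg] <;> ring

lemma coeffL_zero (i : TIdx) : coeffL 0 i = (hdeg i : ℂ) / 2 := by
  cases i <;> simp only [coeffL, hdeg] <;> (try split_ifs) <;> push_cast <;> ring

lemma coeffL_ne_zero {i : TIdx} (hi : i ≠ .M 0) {n : ℤ} (hn : |hdeg i| < n) :
    coeffL n i ≠ 0 := by
  rw [abs_lt] at hn
  intro h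
  cases i with
  | L m =>
    simp only [coeffL, hdeg] at h hn
    have : (m : ℂ) = n := by linear_combination h
    exact (show m ≠ n by omega) (by exact_mod_cast this)
  | G k =>
    simp only [coeffL, hdeg] at h hn
    have : (n : ℂ) = 2 * k + 1 := by linear_combination -2 * h
    exact (show n ≠ 2 * k + 1 by omega) (by exact_mod_cast this)
  | Y k =>
    simp only [coeffL, hdeg] at h hn
    split_ifs at h with hk
    · have : (n : ℂ) = k := by linear_combination -2 * h
      exact (show n ≠ k by omega) (by exact_mod_cast this)
    · have : (k : ℂ) = 0 := by linear_combination 2 * h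
      exact hk (by rw [show k = 0 by exact_mod_cast this]; rfl)
  | M k =>
    simp only [coeffL, hdeg] at h hn
    split_ifs at h with hk
    · have : (k : ℂ) = 0 := by linear_combination 2 * h
      exact hi (by rw [show k = 0 by exact_mod_cast this])
    · have : (n : ℂ) = -k := by linear_combination 2 * h
      exact (show n ≠ -k by omega) (by exact_mod_cast this)

lemma exists_coeffL_ne_zero_shiftL_notMem {i : TIdx} (hi : i ≠ .M 0) (S : Finset TIdx) :
    ∃ n : ℤ, coeffL n i ≠ 0 ∧ shiftL n i ∉ S := by
  have hfresh : ∀ᶠ n in Filter.atTop, ∀ j ∈ S, shiftL n i ≠ j := by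
    refine (Filter.eventually_all_finset S).2 fun j _ => ?_
    filter_upwards [Filter.eventually_gt_atTop (max 0 (hdeg j - hdeg i))] with n hn h
    have := hdeg_shiftL n i ▸ congrArg hdeg h
    omega
  obtain ⟨n, hc, hn⟩ :=
    ((Filter.eventually_gt_atTop |hdeg i|).mono fun n => coeffL_ne_zero hi).and hfresh |>.exists
  exact ⟨n, hc, fun h => hn _ h rfl⟩

end TIdx

open TIdx

lemma sg_zero_left (b : ZMod 2) : sg 0 b = 1 :=
  if_neg fun h => zero_ne_one h.1

lemma sg_zero_right (a : ZMod 2) : sg a 0 = 1 :=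
  if_neg fun h => zero_ne_one h.2

lemma brk_bs (i j : TIdx) : brk (bs i) (bs j) = brIdx i j := by
  simp [brk, bs]

lemma tp_bs (a b : TIdx) : tp (bs a) (bs b) = Finsupp.single (a, b) 1 := by
  simp [tp, bs]

lemma brIdx_L (n : ℤ) (i : TIdx) : brIdx (.L n) i = coeffL n i • bs (shiftL n i) := by
  cases i <;> rfl

lemma brIdx_L_zero (i : TIdx) : brIdx (.L 0) i = ((hdeg i : ℂ) / 2) • bs i := by
  rw [brIdx_L, shiftL_zero, coeffL_zero]

lemma star2_L (n : ℤ) (r : T2) :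
    star2 (bs (.L n)) r = r.sum fun p c =>
      c • (coeffL n p.1 • Finsupp.single (shiftL n p.1, p.2) 1
        + coeffL n p.2 • Finsupp.single (p.1, shiftL n p.2) 1) := by
  rw [star2, bs, Finsupp.lsum_single, LinearMap.toSpanSingleton_apply, one_smul,
    Finsupp.lsum_apply]
  refine Finsupp.sum_congr fun p _ => ?_
  simp only [LinearMap.toSpanSingleton_apply, parity, sg_zero_left, one_smul, brIdx_L, map_smul,
    LinearMap.smul_apply, tp_bs]

lemma star2_L_zero_of_hdeg2_eq (r : T2) (m : ℤ) (h : ∀ p ∈ r.support, hdeg2 p = m) :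
    star2 (bs (.L 0)) r = ((m : ℂ) / 2) • r := by
  conv_rhs => rw [← Finsupp.sum_single r, Finsupp.smul_sum]
  rw [star2_L]
  refine Finsupp.sum_congr fun p hp => ?_
  have hm : coeffL 0 p.1 + coeffL 0 p.2 = (m : ℂ) / 2 := by
    rw [coeffL_zero, coeffL_zero, ← h p hp, hdeg2]; push_cast; ring
  rw [shiftL_zero, shiftL_zero, Prod.mk.eta, ← add_smul, hm, smul_comm, Finsupp.smul_single_one]

lemma star2_L_apply_shiftL_fst {r : T2} {p : TIdx × TIdx} (hp : p ∈ r.support) {n : ℤ}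
    (hn : shiftL n p.1 ∉ r.support.image Prod.fst) :
    star2 (bs (.L n)) r (shiftL n p.1, p.2) = coeffL n p.1 * r p := by
  have hfst : ∀ q ∈ r.support, q.1 ≠ shiftL n p.1 := fun q hq h =>
    hn (Finset.mem_image.2 ⟨q, hq, h⟩)
  rw [star2_L, Finsupp.sum_apply, Finsupp.sum, Finset.sum_eq_single_of_mem p hp]
  · simp [hfst p hp, mul_comm]
  · intro q hq hqp
    have h1 : (shiftL n q.1, q.2) ≠ (shiftL n p.1, p.2) := fun h => hqp <|
      Prod.ext (shiftL_injective n (Prod.ext_iff.1 h).1) (Prod.ext_iff.1 h).2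
    have h2 : (q.1, shiftL n q.2) ≠ (shiftL n p.1, p.2) := fun h => hfst q hq (Prod.ext_iff.1 h).1
    simp [h1, h2]

lemma star2_L_domLCongr_prodComm (n : ℤ) (r : T2) :
    star2 (bs (.L n)) (Finsupp.domLCongr (R := ℂ) (Equiv.prodComm TIdx TIdx) r) =
      Finsupp.domLCongr (R := ℂ) (Equiv.prodComm TIdx TIdx) (star2 (bs (.L n)) r) := by
  induction r using Finsupp.induction_linear with
  | zero => simp
  | add f g hf hg => rw [map_add, map_add, hf, hg, map_add, map_add]
  | single p c =>
    simp only [Finsupp.domLCongr_single, star2_L, Finsupp.sum_single_index, zero_smul, map_smul,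
      map_add, Equiv.prodComm_apply, Prod.swap_prod_mk, Prod.fst_swap, Prod.snd_swap]
    rw [add_comm]

lemma fst_eq_M_zero_of_forall_star2_L_eq_zero {r : T2} (h : ∀ n : ℤ, star2 (bs (.L n)) r = 0)
    {p : TIdx × TIdx} (hp : p ∈ r.support) : p.1 = .M 0 := by
  by_contra hi
  obtain ⟨n, hc, hn⟩ := exists_coeffL_ne_zero_shiftL_notMem hi (r.support.image Prod.fst)
  have hcoeff := star2_L_apply_shiftL_fst hp hn
  rw [h n, Finsupp.zero_apply] at hcoeff
  exact mul_ne_zero hc (Finsupp.mem_support_iff.1 hp) hcoeff.symm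

lemma snd_eq_M_zero_of_forall_star2_L_eq_zero {r : T2} (h : ∀ n : ℤ, star2 (bs (.L n)) r = 0)
    {p : TIdx × TIdx} (hp : p ∈ r.support) : p.2 = .M 0 := by
  refine fst_eq_M_zero_of_forall_star2_L_eq_zero
    (r := Finsupp.domLCongr (R := ℂ) (Equiv.prodComm TIdx TIdx) r) (p := p.swap) (fun n => ?_) ?_
  · rw [star2_L_domLCongr_prodComm, h n, map_zero]
  · simpa [Finsupp.domLCongr_apply, Finsupp.equivMapDomain_apply] using hp

lemma mem_CC_of_forall_star2_L_eq_zero {r : T2} (h : ∀ n : ℤ, star2 (bs (.L n)) r = 0) :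
    r ∈ CC := by
  have hsupp : r.support ⊆ {(.M 0, .M 0)} := fun p hp => Finset.mem_singleton.2 <|
    Prod.ext (fst_eq_M_zero_of_forall_star2_L_eq_zero h hp)
      (snd_eq_M_zero_of_forall_star2_L_eq_zero h hp)
  rw [Finsupp.support_subset_singleton.1 hsupp, ← Finsupp.smul_single_one]
  exact Submodule.smul_mem _ _ (Submodule.subset_span rfl)

lemma star2_eq_zero_of_forall_bs {r : T2} (h : ∀ i, star2 (bs i) r = 0) (x : Tsns) :
    star2 x r = 0 :=
  LinearMap.congr_fun (show star2.flip r = 0 from Finsupp.basisSingleOne.ext h) x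

/-- for a homogeneous derivation `d : tsns → tsns ⊗ tsns` of degree `0`,
`x ∗ d(L₀) = 0` for all `x ∈ tsns`, and consequently `d(L₀) ∈ ℂ M₀ ⊗ M₀`. -/
theorem degree_zero_derivation_L0 (d : Tsns →ₗ[ℂ] T2) (hder : IsDer2 d)
    (hdeg : ∀ i : TIdx, ∀ p ∈ (d (bs i)).support, hdeg2 p = hdeg i) :
    (∀ x : Tsns, star2 x (d (bs (TIdx.L 0))) = 0) ∧ d (bs (TIdx.L 0)) ∈ CC := by
  have hbasis : ∀ j, star2 (bs j) (d (bs (.L 0))) = 0 := by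
    intro j
    have h := hder (.L 0) j
    rw [brk_bs, brIdx_L_zero, map_smul, show parity (.L 0) = 0 from rfl, add_zero,
      sg_zero_left, sg_zero_right, one_smul, one_smul,
      star2_L_zero_of_hdeg2_eq _ _ (hdeg j)] at h
    exact sub_eq_self.1 h.symm
  have hall := star2_eq_zero_of_forall_bs hbasis
  exact ⟨hall, mem_CC_of_forall_star2_L_eq_zero fun n => hall _⟩
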